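/- arXiv:2301.10869 — 2 statements merged into one kernel-verified Lean document; each statement's English description precedes it below -/
import Mathlib

section
/- Let T ≥ 1 and Ω > 0, and let N be the T×T matrix with N_{ij} = Ω for i < j and 0 otherwise. Let e_T be the T-th standard basis vector. Then for every k < T, the ℓ¹-norm of N^k e_T satisfies ‖N^k e_T‖₁ ≤ Ω^k T^k / k!. -/
/-!
The entries of `N ^ k *ᵥ e_T` are nonnegative, and by induction on `m`,
`(N ^ (m + 1) *ᵥ e_T) i ≤ Ω ^ (m + 1) * (T - 1 - i) ^ m / m!`: applying `N` sums the bound over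
the tail `j > i`, which after reflecting `j ↦ T - 1 - j` is controlled by
`∑_{l < d} l ^ m ≤ ∫₀^d x ^ m dx = d ^ (m + 1) / (m + 1)`. The same tail estimate over all `j`
bounds the ℓ¹ norm.
-/

open Matrix Finset
open scoped Nat

lemma sum_range_pow_div_factorial_le (m d : ℕ) :
    ∑ l ∈ range d, (l : ℝ) ^ m / m ! ≤ (d : ℝ) ^ (m + 1) / (m + 1)! := by
  have hmono : MonotoneOn (fun x : ℝ ↦ x ^ m) (Set.Icc 0 (0 + d)) :=
    fun x hx y _ hxy ↦ pow_le_pow_left₀ hx.1 hxy m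
  have hsum := hmono.sum_le_integral
  simp only [zero_add, integral_pow, ne_eq, add_eq_zero, one_ne_zero, and_false,
    not_false_eq_true, zero_pow, sub_zero] at hsum
  rw [← sum_div, Nat.factorial_succ, Nat.cast_mul, ← div_div]
  push_cast
  exact div_le_div_of_nonneg_right hsum (by positivity)

lemma sum_fin_ite_le_rev_eq_sum_range {M : Type*} [AddCommMonoid M] (T i : ℕ) (g : ℕ → M) :
    ∑ j : Fin T, (if i ≤ (j : ℕ) then g (T - 1 - j) else 0) = ∑ l ∈ range (T - i), g l := by
  rw [Fin.sum_univ_eq_sum_range (fun j ↦ if i ≤ j then g (T - 1 - j) else 0), ← sum_filter]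
  have hfilter : (range T).filter (i ≤ ·) = Ico i T := by ext; simp; omega
  rw [hfilter, sum_Ico_eq_sum_range, ← sum_range_reflect]
  exact sum_congr rfl fun l hl ↦ by rw [mem_range] at hl; congr 1; omega

lemma sum_fin_ite_le_le_of_le_mul_pow {T m : ℕ} {c : ℝ} (hc : 0 ≤ c) {v : Fin T → ℝ}
    (hv : ∀ j : Fin T, v j ≤ c * ((T - 1 - j : ℕ) : ℝ) ^ m / m !) (i : ℕ) :
    ∑ j : Fin T, (if i ≤ (j : ℕ) then v j else 0) ≤ c * ((T - i : ℕ) : ℝ) ^ (m + 1) / (m + 1)! :=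
  calc ∑ j : Fin T, (if i ≤ (j : ℕ) then v j else 0)
      ≤ ∑ j : Fin T, (if i ≤ (j : ℕ) then c * ((T - 1 - j : ℕ) : ℝ) ^ m / m ! else 0) := by
        gcongr with j; split_ifs; exacts [hv j, le_rfl]
    _ = c * ∑ l ∈ range (T - i), (l : ℝ) ^ m / m ! := by
        rw [sum_fin_ite_le_rev_eq_sum_range T i (fun l ↦ c * (l : ℝ) ^ m / m !), mul_sum]
        simp only [mul_div_assoc]
    _ ≤ c * ((T - i : ℕ) : ℝ) ^ (m + 1) / (m + 1)! := by
        rw [mul_div_assoc]; gcongr; exact sum_range_pow_div_factorial_le m _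

section StrictUpperConst

variable {T : ℕ} {Ω : ℝ} {N : Matrix (Fin T) (Fin T) ℝ}

lemma mulVec_apply_of_eq_ite (hN : ∀ i j : Fin T, N i j = if (i : ℕ) < (j : ℕ) then Ω else 0)
    (v : Fin T → ℝ) (i : Fin T) :
    (N *ᵥ v) i = Ω * ∑ j : Fin T, if (i : ℕ) + 1 ≤ (j : ℕ) then v j else 0 := by
  simp only [mulVec, dotProduct, hN, mul_sum, Nat.add_one_le_iff]
  exact sum_congr rfl fun j _ ↦ by split_ifs <;> simp

lemma pow_mulVec_nonneg_of_eq_ite (hΩ : 0 ≤ Ω)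
    (hN : ∀ i j : Fin T, N i j = if (i : ℕ) < (j : ℕ) then Ω else 0)
    {v : Fin T → ℝ} (hv : 0 ≤ v) (k : ℕ) : 0 ≤ (N ^ k) *ᵥ v := by
  induction k with
  | zero => simpa using hv
  | succ k ih =>
    intro i
    rw [pow_succ', ← mulVec_mulVec, mulVec_apply_of_eq_ite hN]
    exact mul_nonneg hΩ (sum_nonneg fun j _ ↦ by split_ifs; exacts [ih j, le_rfl])

lemma pow_succ_mulVec_single_le_of_eq_ite (hΩ : 0 ≤ Ω)
    (hN : ∀ i j : Fin T, N i j = if (i : ℕ) < (j : ℕ) then Ω else 0) (j₀ : Fin T) (m : ℕ)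
    (i : Fin T) :
    (N ^ (m + 1) *ᵥ Pi.single j₀ 1) i ≤ Ω ^ (m + 1) * ((T - 1 - i : ℕ) : ℝ) ^ m / m ! := by
  induction m generalizing i with
  | zero =>
    simp only [zero_add, pow_one, pow_zero, Nat.factorial_zero, Nat.cast_one, mul_one, div_one]
    rw [mulVec_single_one, col_apply, hN]
    split_ifs; exacts [le_rfl, hΩ]
  | succ m ih =>
    calc (N ^ (m + 1 + 1) *ᵥ Pi.single j₀ 1) i
        = (N *ᵥ (N ^ (m + 1) *ᵥ Pi.single j₀ 1)) i := by rw [mulVec_mulVec, ← pow_succ']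
      _ = Ω * ∑ j : Fin T, if (i : ℕ) + 1 ≤ (j : ℕ) then (N ^ (m + 1) *ᵥ Pi.single j₀ 1) j else 0 :=
        mulVec_apply_of_eq_ite hN _ i
      _ ≤ Ω * (Ω ^ (m + 1) * ((T - (i + 1) : ℕ) : ℝ) ^ (m + 1) / (m + 1)!) := by
        gcongr; exact sum_fin_ite_le_le_of_le_mul_pow (pow_nonneg hΩ _) ih (i + 1)
      _ = Ω ^ (m + 1 + 1) * ((T - 1 - i : ℕ) : ℝ) ^ (m + 1) / (m + 1)! := by
        rw [Nat.sub_sub, add_comm 1]; ring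

end StrictUpperConst

theorem stmt_6 (T : ℕ) (hT : 1 ≤ T) (Ω : ℝ) (hΩ : 0 < Ω)
    (N : Matrix (Fin T) (Fin T) ℝ)
    (hN : ∀ i j : Fin T, N i j = if (i : ℕ) < (j : ℕ) then Ω else 0)
    (eT : Fin T → ℝ) (heT : eT = Pi.single ⟨T - 1, by omega⟩ 1) :
    ∀ k : ℕ, k < T →
      ∑ i : Fin T, |((N ^ k).mulVec eT) i| ≤ Ω ^ k * (T : ℝ) ^ k / (Nat.factorial k) := by
  intro k _
  have hnonneg : 0 ≤ N ^ k *ᵥ eT :=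
    pow_mulVec_nonneg_of_eq_ite hΩ.le hN (heT ▸ Pi.single_nonneg.2 zero_le_one) k
  rw [sum_congr rfl fun i _ ↦ abs_of_nonneg (hnonneg i), heT]
  cases k with
  | zero => simp [one_apply]
  | succ m =>
    simpa [mul_div_assoc] using sum_fin_ite_le_le_of_le_mul_pow (pow_nonneg hΩ.le _)
      (pow_succ_mulVec_single_le_of_eq_ite hΩ.le hN _ m) 0
end

section
/- Let T ≥ 1 and let N be the T×T matrix with N_{ij} = Ω for i < j and 0 otherwise, Ω > 0. Then for every k < T the operator norm satisfies ‖N^k‖ ≤ √T · Ω^k T^k / k!. -/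
open Matrix

/-- Operator norm induced by the Euclidean norm. -/
noncomputable def opNorm {n : ℕ} (A : Matrix (Fin n) (Fin n) ℝ) : ℝ :=
  ‖(Matrix.toEuclideanCLM (𝕜 := ℝ) (n := Fin n)) A‖

/-- Euclidean norm of a vector. -/
noncomputable def eNorm {n : ℕ} (v : Fin n → ℝ) : ℝ :=
  ‖(WithLp.equiv 2 (Fin n → ℝ)).symm v‖

/-- Infimum of the quadratic form over Euclidean-unit vectors. -/
noncomputable def quadInf {n : ℕ} (A : Matrix (Fin n) (Fin n) ℝ) : ℝ :=
  sInf {x : ℝ | ∃ v : Fin n → ℝ, eNorm v = 1 ∧ x = v ⬝ᵥ A.mulVec v}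

/-!
The entries of `N ^ k` are nonnegative, and its column sums are exactly `Ω ^ k * j.choose k`:
multiplying the all-ones row vector by `N` turns a row vector into its strict partial sums, so
the hockey-stick identity carries the formula from `k` to `k + 1`. As `j.choose k ≤ T ^ k / k!`,
every column has `ℓ¹`-norm at most `Ω ^ k T ^ k / k!`; the operator norm is at most the Frobenius
norm, and each column's `ℓ²`-norm is at most its `ℓ¹`-norm, which produces the factor `√T`.
-/

open Finset

theorem Nat.sum_range_choose_eq_choose_succ (j k : ℕ) :
    ∑ i ∈ range j, i.choose k = j.choose (k + 1) := by
  induction j with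
  | zero => simp
  | succ j ih => rw [sum_range_succ, ih, Nat.choose_succ_succ', add_comm]

lemma Fin.sum_univ_ite_lt_eq_sum_range {M : Type*} [AddCommMonoid M] {n : ℕ} (f : ℕ → M)
    (j : Fin n) : ∑ i : Fin n, (if i < j then f i else 0) = ∑ i ∈ range j, f i := by
  refine (Fin.sum_univ_eq_sum_range (fun i => if i < (j : ℕ) then f i else 0) n).trans ?_
  rw [← sum_filter]
  congr 1
  ext i
  simp only [mem_filter, mem_range]
  omega

lemma opNorm_le_sqrt_sum_sq {n : ℕ} (A : Matrix (Fin n) (Fin n) ℝ) :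
    opNorm A ≤ √(∑ i, ∑ j, A i j ^ 2) := by
  refine ContinuousLinearMap.opNorm_le_bound _ (Real.sqrt_nonneg _) fun x => ?_
  rw [EuclideanSpace.norm_eq, EuclideanSpace.norm_eq, ← Real.sqrt_mul (by positivity), sum_mul]
  gcongr with i
  simpa [Matrix.mulVec, dotProduct] using sum_mul_sq_le_sq_mul_sq univ (A i) x

lemma opNorm_le_sqrt_card_mul_of_sum_abs_col_le {n : ℕ} (A : Matrix (Fin n) (Fin n) ℝ) {c : ℝ}
    (hc : ∀ j, ∑ i, |A i j| ≤ c) : opNorm A ≤ √n * c := by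
  have hcol (j : Fin n) : ∑ i, A i j ^ 2 ≤ c ^ 2 := calc
    ∑ i, A i j ^ 2 = ∑ i, |A i j| ^ 2 := by simp only [sq_abs]
    _ ≤ (∑ i, |A i j|) ^ 2 := sum_sq_le_sq_sum_of_nonneg fun i _ => abs_nonneg _
    _ ≤ c ^ 2 := pow_le_pow_left₀ (sum_nonneg fun i _ => abs_nonneg _) (hc j) 2
  have hbound_nonneg : 0 ≤ √n * c := by
    rcases n.eq_zero_or_pos with rfl | hn
    · simp
    · exact mul_nonneg (Real.sqrt_nonneg _)
        ((sum_nonneg fun i _ => abs_nonneg _).trans (hc ⟨0, hn⟩))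
  calc opNorm A ≤ √(∑ j, ∑ i, A i j ^ 2) := by rw [sum_comm]; exact opNorm_le_sqrt_sum_sq A
    _ ≤ √((√n * c) ^ 2) := by
      rw [mul_pow, Real.sq_sqrt n.cast_nonneg]
      gcongr
      simpa using sum_le_sum fun j (_ : j ∈ univ) => hcol j
    _ = √n * c := Real.sqrt_sq hbound_nonneg

def strictUpper (n : ℕ) (Ω : ℝ) : Matrix (Fin n) (Fin n) ℝ :=
  of fun i j => if i < j then Ω else 0

lemma strictUpper_pow_nonneg {n : ℕ} {Ω : ℝ} (hΩ : 0 ≤ Ω) (k : ℕ) (i j : Fin n) :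
    0 ≤ (strictUpper n Ω ^ k) i j := by
  induction k generalizing j with
  | zero => rw [pow_zero, one_apply]; split_ifs <;> norm_num
  | succ k ih =>
    rw [pow_succ, mul_apply]
    refine sum_nonneg fun m _ => mul_nonneg (ih m) ?_
    simp only [strictUpper, of_apply]; split_ifs <;> simp [hΩ]

lemma one_vecMul_strictUpper_pow (n : ℕ) (Ω : ℝ) (k : ℕ) :
    1 ᵥ* (strictUpper n Ω ^ k) = fun j : Fin n => Ω ^ k * ((j : ℕ).choose k : ℝ) := by
  induction k with
  | zero => ext j; simp
  | succ k ih =>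
    ext j
    rw [pow_succ, ← vecMul_vecMul, ih]
    simp only [vecMul, dotProduct, strictUpper, of_apply, mul_ite, mul_zero]
    rw [Fin.sum_univ_ite_lt_eq_sum_range (fun i => Ω ^ k * (i.choose k : ℝ) * Ω), ← sum_mul,
      ← mul_sum, ← Nat.cast_sum, Nat.sum_range_choose_eq_choose_succ]
    ring

lemma sum_abs_strictUpper_pow_col {n : ℕ} {Ω : ℝ} (hΩ : 0 ≤ Ω) (k : ℕ) (j : Fin n) :
    ∑ i, |(strictUpper n Ω ^ k) i j| = Ω ^ k * ((j : ℕ).choose k : ℝ) := by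
  simp only [abs_of_nonneg (strictUpper_pow_nonneg hΩ k _ j)]
  simpa [vecMul, dotProduct] using congrFun (one_vecMul_strictUpper_pow n Ω k) j

theorem stmt_16_general (T : ℕ) (Ω : ℝ) (hΩ : 0 < Ω)
    (N : Matrix (Fin T) (Fin T) ℝ)
    (hN : ∀ i j : Fin T, N i j = if (i : ℕ) < (j : ℕ) then Ω else 0) :
    ∀ k : ℕ, k < T →
      opNorm (N ^ k) ≤ Real.sqrt T * Ω ^ k * (T : ℝ) ^ k / (Nat.factorial k) := by
  intro k _
  obtain rfl : N = strictUpper T Ω := Matrix.ext hN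
  have hcol (j : Fin T) : ∑ i, |(strictUpper T Ω ^ k) i j| ≤ Ω ^ k * (T ^ k / k.factorial) := by
    rw [sum_abs_strictUpper_pow_col hΩ.le]
    gcongr
    exact (Nat.choose_le_pow_div k j).trans (by gcongr; exact j.is_lt.le)
  calc opNorm (strictUpper T Ω ^ k) ≤ √T * (Ω ^ k * (T ^ k / k.factorial)) :=
        opNorm_le_sqrt_card_mul_of_sum_abs_col_le _ hcol
    _ = √T * Ω ^ k * T ^ k / k.factorial := by ring

theorem stmt_16 (T : ℕ) (hT : 1 ≤ T) (Ω : ℝ) (hΩ : 0 < Ω)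
    (N : Matrix (Fin T) (Fin T) ℝ)
    (hN : ∀ i j : Fin T, N i j = if (i : ℕ) < (j : ℕ) then Ω else 0) :
    ∀ k : ℕ, k < T →
      opNorm (N ^ k) ≤ Real.sqrt T * Ω ^ k * (T : ℝ) ^ k / (Nat.factorial k) :=
  stmt_16_general T Ω hΩ N hN
end
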